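/- Let p_1, …, p_k, p_{k+1} be k+1 distinct primes and λ a positive integer with p_α ∣ λ for all α = 1, …, k+1. For each α ≤ k fix an integer m_α ≥ 1, a permutation π_α of {1, …, m_α}, and constants g_{p_α,i}, g_{p_α} ∈ ℤ_λ; define f_α : ℤ_{p_α}^{m_α} → ℤ_λ by f_α = (λ/p_α)·Σ_{i=1}^{m_α−1} v_{p_α,π_α(i)} v_{p_α,π_α(i+1)} + Σ_{i=1}^{m_α} g_{p_α,i} v_{p_α,i} + g_{p_α} (mod λ), and for γ ∈ ℤ_{p_1} × ⋯ × ℤ_{p_k} let a^γ = Σ_{α=1}^{k} f_α + Σ_{α=1}^{k} (λ/p_α)·v_{p_α,π_α(1)}·γ_α (mod λ). Fix g_{p_{k+1},1}, g_{p_{k+1}} ∈ ℤ_λ and define b^γ : ℤ_{p_1}^{m_1} × ⋯ × ℤ_{p_k}^{m_k} × ℤ_{p_{k+1}} → ℤ_λ by b^γ = a^γ + g_{p_{k+1},1}·v_{p_{k+1},1} + g_{p_{k+1}} (mod λ). Then for every integer τ with 0 < τ < L' := p_{k+1}·∏_{α=1}^{k} p_α^{m_α} and p_{k+1} ∣ τ,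 one has Σ_{γ ∈ ℤ_{p_1}×⋯×ℤ_{p_k}} ρ(ψ(b^γ))(τ) = 0; that is, {ψ(b^γ)} is a (∏_{α=1}^{k} p_α, p_{k+1}·∏_{α=1}^{k} p_α^{m_α}, p_{k+1})-multiple shift complementary set. -/

import Mathlib

/-!
Summing the autocorrelations over `γ` first, the `γ`-dependent part of `b^γ` is a character of
`γ`, and the sum over `γ` kills every pair `(i, i + τ)` whose digits `v_{α, π_α(1)}` differ in
some block `α`. For a surviving pair, `q ∣ τ` and `0 < τ < L'` force `i` and `i + τ` to differ
modulo `∏ p_α ^ m_α`, hence in some digit. Choose, as a function of the set of differing digits,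
a block `α` and the first vertex `π_α(j + 1)` of its path at which they differ (so `j ≥ 1`).
Running the digit `π_α(j)`, where they agree, through all of `ℤ_{p_α}` in both `i` and `i + τ`
leaves that set unchanged and multiplies the summand by a nontrivial `p_α`-th root of unity raised
to the new digit, so each such orbit of `p_α` pairs sums to zero.
-/

open Finset

/-- `eZMod q x = ω_q^x` where `ω_q = exp(2π√-1/q)`. -/
noncomputable def eZMod (q : ℕ) (x : ZMod q) : ℂ :=
  Complex.exp (2 * (Real.pi : ℂ) * Complex.I * (x.val : ℂ) / (q : ℂ))

/-- Aperiodic autocorrelation of a sequence of length `L` at shift `τ`. -/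
noncomputable def aacf (L : ℕ) (a : ℕ → ℂ) (τ : ℕ) : ℂ :=
  ∑ i ∈ Finset.range (L - τ), a i * (starRingEnd ℂ) (a (i + τ))

/-- For `0 ≤ i < ∏ α, p α ^ m α` written as `i = Σ_α i_α · ∏_{β<α} p_β^{m_β}`
with `0 ≤ i_α < p_α^{m_α}`, `digv p m i α t` is the `t`-th base-`p_α` digit
(1-indexed) of `i_α`, viewed in `ℤ_{p_α}`. -/
def digv {k : ℕ} (p m : Fin k → ℕ) (i : ℕ) : (α : Fin k) → ℕ → ZMod (p α) :=
  fun α t =>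
    (((((i / ∏ β ∈ Finset.Iio α, p β ^ m β) % p α ^ m α) / p α ^ (t - 1)) % p α : ℕ) :
      ZMod (p α))

lemma AddChar.map_finset_sum {A M ι : Type*} [AddCommMonoid A] [CommMonoid M]
    (ψ : AddChar A M) (s : Finset ι) (f : ι → A) : ψ (∑ i ∈ s, f i) = ∏ i ∈ s, ψ (f i) := by
  classical
  induction s using Finset.induction_on with
  | empty => simp
  | insert a s ha ih => rw [sum_insert ha, prod_insert ha, AddChar.map_add_eq_mul, ih]

lemma eZMod_eq_stdAddChar {q : ℕ} [NeZero q] (x : ZMod q) : eZMod q x = ZMod.stdAddChar x := by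
  rw [eZMod, ZMod.stdAddChar_apply, ZMod.toCircle_apply]

lemma sum_piFinset_addChar_add_sum_mul {ι R : Type*} [Fintype ι] [DecidableEq ι] [CommRing R]
    (ψ : AddChar R ℂ) (s : ι → Finset ℕ) (A : R) (w : ι → R) :
    ∑ γ ∈ Fintype.piFinset s, ψ (A + ∑ i, w i * (γ i : R)) =
      ψ A * ∏ i, ∑ n ∈ s i, ψ (w i * n) := by
  simp_rw [AddChar.map_add_eq_mul, AddChar.map_finset_sum, ← mul_sum, prod_univ_sum]

lemma sum_range_stdAddChar_div_mul_sub {lam p : ℕ} [NeZero lam] (hpl : p ∣ lam) {a b : ℕ}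
    (ha : a < p) (hb : b < p) :
    ∑ n ∈ range p, ZMod.stdAddChar
        (((lam / p : ℕ) : ZMod lam) * ((a : ZMod lam) - (b : ZMod lam)) * (n : ZMod lam)) =
      if a = b then (p : ℂ) else 0 := by
  obtain ⟨c, rfl⟩ := hpl
  have hc : c ≠ 0 := right_ne_zero_of_mul (NeZero.ne (p * c))
  rw [Nat.mul_div_cancel_left c (by omega)]
  set w : ZMod (p * c) := (c : ZMod (p * c)) * ((a : ZMod (p * c)) - (b : ZMod (p * c)))
  have hpow (n : ℕ) : ZMod.stdAddChar (w * (n : ZMod (p * c))) = ZMod.stdAddChar w ^ n := by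
    rw [mul_comm w, ← nsmul_eq_mul, AddChar.map_nsmul_eq_pow]
  simp_rw [hpow]
  split_ifs with hab
  · simp [w, hab]
  have hwp : w * p = 0 := by
    rw [mul_right_comm, ← Nat.cast_mul, mul_comm c, ZMod.natCast_self, zero_mul]
  have hw0 : w ≠ 0 := by
    intro hw
    have hcast : w = ((c * ((a : ℤ) - b) : ℤ) : ZMod (p * c)) := by push_cast [w]; rfl
    rw [hcast, ZMod.intCast_zmod_eq_zero_iff_dvd, Nat.cast_mul, mul_comm (p : ℤ),
      mul_dvd_mul_iff_left (by exact_mod_cast hc)] at hw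
    have habs : |(a : ℤ) - b| < p := abs_sub_lt_iff.2 ⟨by omega, by omega⟩
    exact hab (by exact_mod_cast sub_eq_zero.1 (Int.eq_zero_of_abs_lt_dvd hw habs))
  have hw1 : ZMod.stdAddChar w ≠ 1 := by
    rwa [← AddChar.map_zero_eq_one (ZMod.stdAddChar (N := p * c)), Ne,
      ZMod.injective_stdAddChar.eq_iff]
  rw [geom_sum_eq hw1, ← hpow, hwp, AddChar.map_zero_eq_one, sub_self, zero_div]

theorem sum_piFinset_aacf_stdAddChar {k lam : ℕ} [NeZero lam] (p : Fin k → ℕ)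
    (hpl : ∀ α, p α ∣ lam) (L τ : ℕ) (E : ℕ → ZMod lam) (u : ℕ → Fin k → ℕ)
    (hu : ∀ x α, u x α < p α) :
    ∑ γ ∈ Fintype.piFinset (fun α => range (p α)),
      aacf L (fun x => ZMod.stdAddChar (E x + ∑ α, ((lam / p α : ℕ) : ZMod lam) *
        (u x α : ZMod lam) * ((γ α : ℕ) : ZMod lam))) τ =
      (∏ α, (p α : ℂ)) * ∑ x ∈ (range (L - τ)).filter (fun x => ∀ α, u x α = u (x + τ) α),
        ZMod.stdAddChar (E x - E (x + τ)) := by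
  classical
  have hconj (A B : ZMod lam) :
      ZMod.stdAddChar A * starRingEnd ℂ (ZMod.stdAddChar B) = ZMod.stdAddChar (A - B) := by
    rw [← AddChar.map_neg_eq_conj, ← AddChar.map_add_eq_mul, sub_eq_add_neg]
  simp only [aacf, hconj, add_sub_add_comm, ← sum_sub_distrib, ← sub_mul, ← mul_sub]
  rw [sum_comm, sum_filter, mul_sum]
  refine sum_congr rfl fun x _ => ?_
  rw [sum_piFinset_addChar_add_sum_mul]
  simp only [sum_range_stdAddChar_div_mul_sub (hpl _) (hu _ _) (hu _ _)]
  rw [Fintype.prod_ite_zero]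
  split_ifs <;> ring

/-- `setDigit W P x d` replaces the base-`P` digit of `x` of weight `W` by `d`. -/
def setDigit (W P x d : ℕ) : ℕ := x / (W * P) * (W * P) + d * W + x % W

section SetDigit

variable {W P x d : ℕ}

lemma setDigit_cast (W P x d : ℕ) :
    (setDigit W P x d : ℤ) = x + ((d : ℤ) - (x / W % P : ℕ)) * W := by
  have h1 := Nat.div_add_mod x (W * P)
  have h2 : x % (W * P) = x % W + W * (x / W % P) := Nat.mod_mul
  unfold setDigit
  zify at h1 h2 ⊢
  linear_combination h1 - h2

lemma setDigit_add {τ : ℕ} (h : x / W % P = (x + τ) / W % P) :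
    setDigit W P x d + τ = setDigit W P (x + τ) d := by
  zify
  rw [setDigit_cast, setDigit_cast, h]
  push_cast
  ring

lemma eq_setDigit_of_setDigit_zero_eq {y : ℕ} (h : setDigit W P x 0 = setDigit W P y 0) :
    y = setDigit W P x (y / W % P) := by
  zify at h ⊢
  rw [setDigit_cast, setDigit_cast] at h
  rw [setDigit_cast]
  linarith

lemma setDigit_div_mul (hW : 0 < W) (hd : d < P) : setDigit W P x d / (W * P) = x / (W * P) := by
  have hlt : d * W + x % W < W * P := by
    have := Nat.mod_lt x hW
    nlinarith
  rw [setDigit, add_assoc, add_comm, Nat.add_mul_div_right _ _ (Nat.mul_pos hW (by omega)),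
    Nat.div_eq_of_lt hlt, zero_add]

lemma setDigit_mod : setDigit W P x d % W = x % W := by
  rw [setDigit, show x / (W * P) * (W * P) + d * W + x % W = x % W + (x / (W * P) * P + d) * W by
    ring, Nat.add_mul_mod_self_right, Nat.mod_mod]

lemma setDigit_div_mod (hW : 0 < W) (hd : d < P) : setDigit W P x d / W % P = d := by
  rw [setDigit, show x / (W * P) * (W * P) + d * W + x % W = x % W + (d + P * (x / (W * P))) * W by
    ring, Nat.add_mul_div_right _ _ hW, Nat.div_eq_of_lt (Nat.mod_lt x hW), zero_add,
    Nat.add_mul_mod_self_left, Nat.mod_eq_of_lt hd]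

lemma setDigit_setDigit (hW : 0 < W) (hd : d < P) (d' : ℕ) :
    setDigit W P (setDigit W P x d) d' = setDigit W P x d' := by
  zify
  rw [setDigit_cast, setDigit_div_mod hW hd, setDigit_cast, setDigit_cast]
  ring

lemma setDigit_injOn (hW : 0 < W) : Set.InjOn (setDigit W P x) (range P) := by
  intro d hd d' hd' h
  calc d = setDigit W P x d / W % P := (setDigit_div_mod hW (mem_range.1 hd)).symm
    _ = d' := by rw [h, setDigit_div_mod hW (mem_range.1 hd')]

lemma setDigit_div_of_dvd {V : ℕ} (hW : 0 < W) (hd : d < P) (hV : W * P ∣ V) :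
    setDigit W P x d / V = x / V := by
  obtain ⟨c, rfl⟩ := hV
  rw [← Nat.div_div_eq_div_mul _ (W * P), ← Nat.div_div_eq_div_mul x (W * P),
    setDigit_div_mul hW hd]

lemma div_mod_eq_of_mod_eq {V Q y : ℕ} (hV : V * Q ∣ W) (h : x % W = y % W) :
    x / V % Q = y / V % Q := by
  rw [← Nat.mod_mul_right_div_self, ← Nat.mod_mul_right_div_self, ← Nat.mod_mod_of_dvd x hV,
    ← Nat.mod_mod_of_dvd y hV, h]

lemma setDigit_div_mod_of_dvd {V Q : ℕ} (hV : V * Q ∣ W) :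
    setDigit W P x d / V % Q = x / V % Q :=
  div_mod_eq_of_mod_eq hV setDigit_mod

lemma setDigit_lt {M : ℕ} (hW : 0 < W) (hd : d < P) (hM : W * P ∣ M) (hx : x < M) :
    setDigit W P x d < M := by
  have := Nat.div_lt_div_of_lt_of_dvd hM hx
  rw [← setDigit_div_mul hW hd] at this
  exact Nat.lt_of_div_lt_div this

end SetDigit

section Digits

variable {k : ℕ} (p m : Fin k → ℕ)

def weight (α : Fin k) (t : ℕ) : ℕ := (∏ β ∈ Iio α, p β ^ m β) * p α ^ (t - 1)

def digit (x : ℕ) (α : Fin k) (t : ℕ) : ℕ := (digv p m (x % ∏ β, p β ^ m β) α t).val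

variable {p m}

lemma digit_lt (x : ℕ) {α : Fin k} (t : ℕ) (hp : 0 < p α) : digit p m x α t < p α := by
  rw [digit, digv, ZMod.val_natCast]
  exact Nat.mod_lt _ hp

lemma weight_pos (hp : ∀ α, 0 < p α) (α : Fin k) (t : ℕ) : 0 < weight p m α t :=
  Nat.mul_pos (prod_pos fun β _ => pow_pos (hp β) _) (pow_pos (hp α) _)

lemma weight_mul_eq_prod_mul_pow {α : Fin k} {t : ℕ} (ht : 1 ≤ t) :
    weight p m α t * p α = (∏ β ∈ Iio α, p β ^ m β) * p α ^ t := by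
  rw [weight, mul_assoc, ← pow_succ, Nat.sub_add_cancel ht]

lemma prod_Iio_mul_pow_dvd_prod_Iio {α β : Fin k} (h : α < β) :
    (∏ γ ∈ Iio α, p γ ^ m γ) * p α ^ m α ∣ ∏ γ ∈ Iio β, p γ ^ m γ := by
  rw [prod_Iio_mul_eq_prod_Iic]
  exact prod_dvd_prod_of_subset _ _ _ fun γ hγ => mem_Iio.2 ((mem_Iic.1 hγ).trans_lt h)

lemma prod_Iio_mul_pow_dvd_prod (α : Fin k) :
    (∏ γ ∈ Iio α, p γ ^ m γ) * p α ^ m α ∣ ∏ γ, p γ ^ m γ := by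
  rw [prod_Iio_mul_eq_prod_Iic]
  exact prod_dvd_prod_of_subset _ _ _ (subset_univ _)

lemma weight_mul_dvd_prod {α : Fin k} {t : ℕ} (ht : t ∈ Icc 1 (m α)) :
    weight p m α t * p α ∣ ∏ β, p β ^ m β := by
  rw [mem_Icc] at ht
  rw [weight_mul_eq_prod_mul_pow ht.1]
  exact (mul_dvd_mul_left _ (pow_dvd_pow _ ht.2)).trans (prod_Iio_mul_pow_dvd_prod α)

lemma weight_mul_dvd_weight {α β : Fin k} {t s : ℕ} (ht : t ∈ Icc 1 (m α))
    (h : α < β ∨ α = β ∧ t < s) : weight p m α t * p α ∣ weight p m β s := by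
  rw [mem_Icc] at ht
  rw [weight_mul_eq_prod_mul_pow ht.1]
  rcases h with h | ⟨rfl, h⟩
  · exact ((mul_dvd_mul_left _ (pow_dvd_pow _ ht.2)).trans
      (prod_Iio_mul_pow_dvd_prod_Iio h)).trans (dvd_mul_right _ _)
  · exact mul_dvd_mul_left _ (pow_dvd_pow _ (by omega))

lemma weight_mul_dvd_or {α β : Fin k} {t s : ℕ} (ht : t ∈ Icc 1 (m α)) (hs : s ∈ Icc 1 (m β))
    (hne : ¬(β = α ∧ s = t)) :
    weight p m α t * p α ∣ weight p m β s ∨ weight p m β s * p β ∣ weight p m α t := by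
  rcases lt_trichotomy α β with h | rfl | h
  · exact .inl (weight_mul_dvd_weight ht (.inl h))
  · rcases lt_trichotomy t s with h | rfl | h
    · exact .inl (weight_mul_dvd_weight ht (.inr ⟨rfl, h⟩))
    · exact absurd ⟨rfl, rfl⟩ hne
    · exact .inr (weight_mul_dvd_weight hs (.inr ⟨rfl, h⟩))
  · exact .inr (weight_mul_dvd_weight hs (.inl h))

lemma digit_eq_div_weight {α : Fin k} {t : ℕ} (ht : t ∈ Icc 1 (m α)) (x : ℕ) :
    digit p m x α t = x / weight p m α t % p α := by
  have ht' := mem_Icc.1 ht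
  have hpow : p α ^ m α = p α ^ (t - 1) * p α ^ (m α - (t - 1)) := by
    rw [← pow_add]
    congr 1
    omega
  have hdvd : p α ∣ p α ^ (m α - (t - 1)) := dvd_pow_self _ (by omega)
  rw [digit, digv, ZMod.val_natCast, Nat.mod_mod, hpow, Nat.mod_mul_right_div_self,
    Nat.mod_mod_of_dvd _ hdvd, Nat.div_div_eq_div_mul]
  exact div_mod_eq_of_mod_eq (weight_mul_dvd_prod ht) (Nat.mod_mod _ _)

lemma exists_div_mod_ne_of_mod_ne (W P : ℕ → ℕ) (hW0 : W 0 = 1)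
    (hW : ∀ j, W (j + 1) = W j * P j) {x y : ℕ} :
    ∀ {n : ℕ}, x % W n ≠ y % W n → ∃ j < n, x / W j % P j ≠ y / W j % P j
  | 0, h => absurd (by rw [hW0, Nat.mod_one, Nat.mod_one]) h
  | n + 1, h => by
    by_cases hn : x % W n = y % W n
    · refine ⟨n, n.lt_succ_self, fun hd => h ?_⟩
      rw [hW, Nat.mod_mul, Nat.mod_mul, hn, hd]
    · obtain ⟨j, hj, hne⟩ := exists_div_mod_ne_of_mod_ne W P hW0 hW hn
      exact ⟨j, by omega, hne⟩

lemma exists_digit_ne_of_mod_ne {x y : ℕ}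
    (h : x % ∏ α, p α ^ m α ≠ y % ∏ α, p α ^ m α) :
    ∃ α t, t ∈ Icc 1 (m α) ∧ digit p m x α t ≠ digit p m y α t := by
  classical
  set W : ℕ → ℕ := fun j => ∏ β : Fin k, if (β : ℕ) < j then p β ^ m β else 1
  set P : ℕ → ℕ := fun j => ∏ β : Fin k, if (β : ℕ) = j then p β ^ m β else 1
  have hW (j : ℕ) : W (j + 1) = W j * P j := by
    simp only [W, P, ← prod_mul_distrib]
    refine prod_congr rfl fun β _ => ?_
    split_ifs <;> first | (exfalso; omega) | simp
  have hWk : W k = ∏ β, p β ^ m β := prod_congr rfl fun β _ => if_pos β.isLt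
  have hWα (α : Fin k) : W α = ∏ β ∈ Iio α, p β ^ m β := by
    simp only [W]
    rw [← prod_filter]
    congr 1
    ext β
    simp only [mem_filter, mem_univ, true_and, mem_Iio, Fin.lt_def]
  have hPα (α : Fin k) : P α = p α ^ m α := by
    simp only [P, Fin.val_inj]
    exact Fintype.prod_ite_eq' α _
  obtain ⟨j, hj, hne⟩ := exists_div_mod_ne_of_mod_ne W P (by simp [W]) hW (n := k) (hWk ▸ h)
  set α : Fin k := ⟨j, hj⟩
  rw [show j = (α : ℕ) from rfl, hWα, hPα] at hne
  obtain ⟨t, ht, hne⟩ := exists_div_mod_ne_of_mod_ne (fun t => p α ^ t) (fun _ => p α)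
    (pow_zero _) (fun t => pow_succ _ _) hne
  have ht' : t + 1 ∈ Icc 1 (m α) := mem_Icc.2 ⟨by omega, by omega⟩
  refine ⟨α, t + 1, ht', ?_⟩
  rwa [digit_eq_div_weight ht', digit_eq_div_weight ht', weight,
    Nat.add_sub_cancel, ← Nat.div_div_eq_div_mul, ← Nat.div_div_eq_div_mul]

lemma digit_setDigit (hp : ∀ α, 0 < p α) {α β : Fin k} {t s d : ℕ} (ht : t ∈ Icc 1 (m α))
    (hs : s ∈ Icc 1 (m β)) (hd : d < p α) (x : ℕ) :
    digit p m (setDigit (weight p m α t) (p α) x d) β s =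
      if β = α ∧ s = t then d else digit p m x β s := by
  have hW := weight_pos (m := m) hp α t
  rw [digit_eq_div_weight hs, digit_eq_div_weight hs]
  split_ifs with h
  · obtain ⟨rfl, rfl⟩ := h
    exact setDigit_div_mod hW hd
  · rcases weight_mul_dvd_or ht hs h with hdvd | hdvd
    · rw [setDigit_div_of_dvd hW hd hdvd]
    · exact setDigit_div_mod_of_dvd hdvd

end Digits

section PathPhase

variable {R : Type*} [CommRing R]

lemma sum_Ico_mul_succ_sub {M j : ℕ} (hj : j ∈ Ico 1 M) (u v : ℕ → R)
    (huv : ∀ s ∈ Icc 1 M, s ≠ j → u s = v s) :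
    ∑ s ∈ Ico 1 M, u s * u (s + 1) - ∑ s ∈ Ico 1 M, v s * v (s + 1) =
      (u j - v j) * (v (j + 1) + if 2 ≤ j then v (j - 1) else 0) := by
  rw [mem_Ico] at hj
  have hsucc : u (j + 1) = v (j + 1) := huv _ (mem_Icc.2 ⟨by omega, by omega⟩) (by omega)
  have hother : ∀ s ∈ Ico 1 M, s ≠ j - 1 → s ≠ j → u s * u (s + 1) - v s * v (s + 1) = 0 := by
    intro s hs h1 h2
    rw [mem_Ico] at hs
    rw [huv s (mem_Icc.2 ⟨hs.1, hs.2.le⟩) h2,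
      huv (s + 1) (mem_Icc.2 ⟨by omega, by omega⟩) (by omega), sub_self]
  rw [← sum_sub_distrib]
  split_ifs with h2
  · have hprev : u (j - 1) = v (j - 1) := huv _ (mem_Icc.2 ⟨by omega, by omega⟩) (by omega)
    rw [sum_eq_add (j - 1) j (by omega) (fun s hs h => hother s hs h.1 h.2)
      (fun h => absurd (mem_Ico.2 ⟨by omega, by omega⟩) h) (fun h => absurd (mem_Ico.2 hj) h),
      Nat.sub_add_cancel (by omega : 1 ≤ j), hprev, hsucc]
    ring
  · rw [sum_eq_single j (fun s hs h => hother s hs (by rw [mem_Ico] at hs; omega) h)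
      (fun h => absurd (mem_Ico.2 hj) h), hsucc]
    ring

lemma sum_Icc_mul_sub {M c : ℕ} (hc : c ∈ Icc 1 M) (g u v : ℕ → R)
    (huv : ∀ t ∈ Icc 1 M, t ≠ c → u t = v t) :
    ∑ t ∈ Icc 1 M, g t * u t - ∑ t ∈ Icc 1 M, g t * v t = g c * (u c - v c) := by
  rw [← sum_sub_distrib, sum_eq_single c (fun t ht h => by rw [huv t ht h, sub_self])
    (fun h => absurd hc h), mul_sub]

/-- The paper's `f_α`, as a function of the digit values `u t = v_{p_α, t}`. -/
def pathPhase (M : ℕ) (σ : ℕ → ℕ) (c : R) (g : ℕ → R) (g₀ : R) (u : ℕ → R) : R :=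
  c * ∑ s ∈ Ico 1 M, u (σ s) * u (σ (s + 1)) + ∑ t ∈ Icc 1 M, g t * u t + g₀

variable {M : ℕ} {σ : ℕ → ℕ} (c : R) (g : ℕ → R) (g₀ : R) {u v : ℕ → R}

lemma pathPhase_congr (hσ : ∀ s ∈ Icc 1 M, σ s ∈ Icc 1 M) (huv : ∀ t ∈ Icc 1 M, u t = v t) :
    pathPhase M σ c g g₀ u = pathPhase M σ c g g₀ v := by
  have hquad : ∀ s ∈ Ico 1 M, u (σ s) * u (σ (s + 1)) = v (σ s) * v (σ (s + 1)) := by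
    intro s hs
    rw [mem_Ico] at hs
    rw [huv _ (hσ s (mem_Icc.2 ⟨hs.1, hs.2.le⟩)), huv _ (hσ (s + 1) (mem_Icc.2 ⟨by omega, hs.2⟩))]
  have hlin : ∑ t ∈ Icc 1 M, g t * u t = ∑ t ∈ Icc 1 M, g t * v t :=
    sum_congr rfl fun t ht => by rw [huv t ht]
  rw [pathPhase, pathPhase, sum_congr rfl hquad, hlin]

lemma pathPhase_sub {j : ℕ} (hσ : ∀ s ∈ Icc 1 M, σ s ∈ Icc 1 M)
    (hσinj : Set.InjOn σ (Icc 1 M)) (hj : j ∈ Ico 1 M)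
    (huv : ∀ t ∈ Icc 1 M, t ≠ σ j → u t = v t) :
    pathPhase M σ c g g₀ u - pathPhase M σ c g g₀ v =
      (u (σ j) - v (σ j)) *
        (c * (v (σ (j + 1)) + if 2 ≤ j then v (σ (j - 1)) else 0) + g (σ j)) := by
  have hjIcc : j ∈ Icc 1 M := mem_Icc.2 ⟨(mem_Ico.1 hj).1, (mem_Ico.1 hj).2.le⟩
  have hquad := sum_Ico_mul_succ_sub hj (u ∘ σ) (v ∘ σ) fun s hs h =>
    huv _ (hσ s hs) fun h' => h (hσinj (mem_coe.2 hs) (mem_coe.2 hjIcc) h')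
  have hlin := sum_Icc_mul_sub (hσ j hjIcc) g u v huv
  simp only [Function.comp] at hquad
  rw [pathPhase, pathPhase]
  linear_combination c * hquad + hlin

end PathPhase

section Phase

variable {k : ℕ} (p m : Fin k → ℕ) (π : Fin k → Equiv.Perm ℕ) {R : Type*} [CommRing R]

/-- The exponent of `b^0` at the sequence index `x`; `h` carries the `ℤ_{p_{k+1}}` part. -/
def phase (c : Fin k → R) (g : Fin k → ℕ → R) (g₀ : Fin k → R) (h : ℕ → R) (x : ℕ) : R :=
  ∑ α, pathPhase (m α) (π α) (c α) (g α) (g₀ α) (fun t => (digit p m x α t : R)) +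
    h (x / ∏ α, p α ^ m α)

variable {p m π} (c : Fin k → R) (g : Fin k → ℕ → R) (g₀ : Fin k → R) (h : ℕ → R)

lemma phase_setDigit_sub (hp : ∀ α, 0 < p α)
    (hπ : ∀ α, ∀ i ∈ Icc 1 (m α), π α i ∈ Icc 1 (m α)) {α : Fin k} {j d : ℕ}
    (hj : j ∈ Ico 1 (m α)) (hd : d < p α) (x : ℕ) :
    phase p m π c g g₀ h (setDigit (weight p m α (π α j)) (p α) x d) - phase p m π c g g₀ h x =
      ((d : R) - digit p m x α (π α j)) * (c α * (digit p m x α (π α (j + 1)) +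
        if 2 ≤ j then (digit p m x α (π α (j - 1)) : R) else 0) + g α (π α j)) := by
  have hc : π α j ∈ Icc 1 (m α) := hπ α j (mem_Icc.2 ⟨(mem_Ico.1 hj).1, (mem_Ico.1 hj).2.le⟩)
  have hdig (β : Fin k) (s : ℕ) (hs : s ∈ Icc 1 (m β)) := digit_setDigit hp hc hs hd x
  rw [phase, phase, setDigit_div_of_dvd (weight_pos hp α _) hd (weight_mul_dvd_prod hc),
    add_sub_add_right_eq_sub, ← sum_sub_distrib, sum_eq_single α]
  · rw [pathPhase_sub (c α) (g α) (g₀ α) (hπ α) (π α).injective.injOn hj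
      fun t ht hne => by rw [hdig α t ht, if_neg (by tauto)], hdig α _ hc, if_pos ⟨rfl, rfl⟩]
  · intro β _ hβ
    rw [pathPhase_congr _ _ _ (hπ β) fun t ht => by rw [hdig β t ht, if_neg (by tauto)],
      sub_self]
  · simp

lemma phase_setDigit_sub_phase_setDigit (hp : ∀ α, 0 < p α)
    (hπ : ∀ α, ∀ i ∈ Icc 1 (m α), π α i ∈ Icc 1 (m α)) {α : Fin k} {j d : ℕ}
    (hj : j ∈ Ico 1 (m α)) (hd : d < p α) {x y : ℕ}
    (hcur : digit p m x α (π α j) = digit p m y α (π α j))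
    (hprev : 2 ≤ j → digit p m x α (π α (j - 1)) = digit p m y α (π α (j - 1))) :
    phase p m π c g g₀ h (setDigit (weight p m α (π α j)) (p α) x d) -
        phase p m π c g g₀ h (setDigit (weight p m α (π α j)) (p α) y d) =
      phase p m π c g g₀ h x - phase p m π c g g₀ h y + c α * ((d : R) - digit p m x α (π α j)) *
        ((digit p m x α (π α (j + 1)) : R) - digit p m y α (π α (j + 1))) := by
  have hx := phase_setDigit_sub c g g₀ h hp hπ hj hd x
  have hy := phase_setDigit_sub c g g₀ h hp hπ hj hd y
  rw [← hcur] at hy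
  split_ifs at hx hy with h2
  · rw [← hprev h2] at hy
    linear_combination hx - hy
  · linear_combination hx - hy

end Phase

section Pivot

variable {k : ℕ} (p m : Fin k → ℕ) (π : Fin k → Equiv.Perm ℕ) (τ : ℕ)

def digitDiff (x : ℕ) (α : Fin k) (t : ℕ) : Prop :=
  t ∈ Icc 1 (m α) ∧ digit p m x α t ≠ digit p m (x + τ) α t

def IsPivot (D : Fin k → ℕ → Prop) (a : Fin k × ℕ) : Prop :=
  1 ≤ a.2 ∧ a.2 < m a.1 ∧ (∀ s ∈ Icc 1 a.2, ¬ D a.1 (π a.1 s)) ∧ D a.1 (π a.1 (a.2 + 1))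

noncomputable def pivot [NeZero k] (x : ℕ) : Fin k × ℕ :=
  Classical.epsilon (IsPivot m π (digitDiff p m τ x))

def setPathDigit (a : Fin k × ℕ) (x d : ℕ) : ℕ :=
  setDigit (weight p m a.1 (π a.1 a.2)) (p a.1) x d

noncomputable def pivotKey [NeZero k] (x : ℕ) : (Fin k × ℕ) × ℕ :=
  (pivot p m π τ x, setPathDigit p m π (pivot p m π τ x) x 0)

def startAgreeSet (L : ℕ) : Finset ℕ :=
  (range (L - τ)).filter fun x => ∀ α, digit p m x α (π α 1) = digit p m (x + τ) α (π α 1)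

variable {p m π τ}

lemma exists_isPivot (hπ : ∀ α, ∀ i ∈ Icc 1 (m α), π α i ∈ Icc 1 (m α))
    (D : Fin k → ℕ → Prop) (hD : ∀ α t, D α t → t ∈ Icc 1 (m α)) (h1 : ∀ α, ¬ D α (π α 1))
    (hex : ∃ α t, D α t) : ∃ a, IsPivot m π D a := by
  classical
  obtain ⟨α, t, hαt⟩ := hex
  obtain ⟨s₀, hs₀, rfl⟩ := surjOn_of_injOn_of_card_le (π α) (fun i hi => hπ α i hi)
    (π α).injective.injOn le_rfl (mem_coe.2 (hD α t hαt))
  have hex' : ∃ s, 1 ≤ s ∧ D α (π α s) := ⟨s₀, (mem_Icc.1 hs₀).1, hαt⟩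
  set s := Nat.find hex'
  obtain ⟨hs1, hsD⟩ : 1 ≤ s ∧ D α (π α s) := Nat.find_spec hex'
  have hs2 : 2 ≤ s := by
    by_contra h
    exact h1 α (by rwa [show s = 1 by omega] at hsD)
  have hsm : s ≤ m α := (Nat.find_min' hex' ⟨(mem_Icc.1 hs₀).1, hαt⟩).trans (mem_Icc.1 hs₀).2
  have hmin : ∀ s' ∈ Icc 1 (s - 1), ¬ D α (π α s') := fun s' hs' hDs' =>
    Nat.find_min hex' (by rw [mem_Icc] at hs'; omega) ⟨(mem_Icc.1 hs').1, hDs'⟩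
  exact ⟨(α, s - 1), show 1 ≤ s - 1 by omega, show s - 1 < m α by omega, hmin,
    show D α (π α (s - 1 + 1)) by rwa [Nat.sub_add_cancel (by omega)]⟩

lemma isPivot_pivot [NeZero k] (hπ : ∀ α, ∀ i ∈ Icc 1 (m α), π α i ∈ Icc 1 (m α)) {L x : ℕ}
    (hτ : ¬ (∏ α, p α ^ m α) ∣ τ) (hx : x ∈ startAgreeSet p m π τ L) :
    IsPivot m π (digitDiff p m τ x) (pivot p m π τ x) := by
  have hmod : x % ∏ α, p α ^ m α ≠ (x + τ) % ∏ α, p α ^ m α := fun h =>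
    hτ (Nat.dvd_of_mod_eq_zero (by simpa using Nat.sub_mod_eq_zero_of_mod_eq h.symm))
  obtain ⟨α, t, ht, hne⟩ := exists_digit_ne_of_mod_ne hmod
  exact Classical.epsilon_spec (exists_isPivot hπ _ (fun _ _ h => h.1)
    (fun α h => h.2 ((mem_filter.1 hx).2 α)) ⟨α, t, ht, hne⟩)

lemma pivot_eq_of_digitDiff_eq [NeZero k] {x y : ℕ}
    (h : digitDiff p m τ y = digitDiff p m τ x) : pivot p m π τ y = pivot p m π τ x := by
  rw [pivot, pivot, h]

lemma IsPivot.apply_mem_Icc (hπ : ∀ α, ∀ i ∈ Icc 1 (m α), π α i ∈ Icc 1 (m α))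
    {x : ℕ} {a : Fin k × ℕ}
    (ha : IsPivot m π (digitDiff p m τ x) a) : π a.1 a.2 ∈ Icc 1 (m a.1) :=
  hπ _ _ (mem_Icc.2 ⟨ha.1, ha.2.1.le⟩)

lemma IsPivot.digit_eq (hπ : ∀ α, ∀ i ∈ Icc 1 (m α), π α i ∈ Icc 1 (m α))
    {x : ℕ} {a : Fin k × ℕ}
    (ha : IsPivot m π (digitDiff p m τ x) a) {s : ℕ} (hs : s ∈ Icc 1 a.2) :
    digit p m x a.1 (π a.1 s) = digit p m (x + τ) a.1 (π a.1 s) := by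
  by_contra hne
  exact ha.2.2.1 s hs ⟨hπ _ _ (Icc_subset_Icc_right ha.2.1.le hs), hne⟩

lemma setPathDigit_add (hπ : ∀ α, ∀ i ∈ Icc 1 (m α), π α i ∈ Icc 1 (m α))
    {x : ℕ} {a : Fin k × ℕ}
    (ha : IsPivot m π (digitDiff p m τ x) a) (d : ℕ) :
    setPathDigit p m π a x d + τ = setPathDigit p m π a (x + τ) d := by
  apply setDigit_add
  rw [← digit_eq_div_weight (ha.apply_mem_Icc hπ), ← digit_eq_div_weight (ha.apply_mem_Icc hπ)]
  exact ha.digit_eq hπ (mem_Icc.2 ⟨ha.1, le_rfl⟩)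

lemma digitDiff_setPathDigit (hp : ∀ α, 0 < p α)
    (hπ : ∀ α, ∀ i ∈ Icc 1 (m α), π α i ∈ Icc 1 (m α))
    {x : ℕ} {a : Fin k × ℕ}
    (ha : IsPivot m π (digitDiff p m τ x) a) {d : ℕ} (hd : d < p a.1) :
    digitDiff p m τ (setPathDigit p m π a x d) = digitDiff p m τ x := by
  funext β t
  apply propext
  unfold digitDiff
  rw [setPathDigit_add hπ ha]
  refine and_congr_right fun ht => ?_
  rw [setPathDigit, setPathDigit, digit_setDigit hp (ha.apply_mem_Icc hπ) ht hd,
    digit_setDigit hp (ha.apply_mem_Icc hπ) ht hd]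
  split_ifs with h
  · obtain ⟨rfl, rfl⟩ := h
    simp [ha.digit_eq hπ (mem_Icc.2 ⟨ha.1, le_rfl⟩)]
  · rfl

lemma setPathDigit_mem_startAgreeSet (hp : ∀ α, 0 < p α) (hm : ∀ α, 1 ≤ m α)
    (hπ : ∀ α, ∀ i ∈ Icc 1 (m α), π α i ∈ Icc 1 (m α)) {x : ℕ} {a : Fin k × ℕ}
    (ha : IsPivot m π (digitDiff p m τ x) a) {L : ℕ} (hL : (∏ α, p α ^ m α) ∣ L)
    (hx : x ∈ startAgreeSet p m π τ L) {d : ℕ} (hd : d < p a.1) :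
    setPathDigit p m π a x d ∈ startAgreeSet p m π τ L := by
  obtain ⟨hxL, hx1⟩ := mem_filter.1 hx
  rw [mem_range] at hxL
  refine mem_filter.2 ⟨mem_range.2 ?_, fun β => ?_⟩
  · have hlt := setDigit_lt (weight_pos hp _ _) hd
      ((weight_mul_dvd_prod (ha.apply_mem_Icc hπ)).trans hL) (show x + τ < L by omega)
    have hadd := setPathDigit_add hπ ha d
    unfold setPathDigit at hadd ⊢
    omega
  · by_contra hne
    have hβ : digitDiff p m τ x β (π β 1) := digitDiff_setPathDigit hp hπ ha hd ▸
      ⟨hπ β 1 (mem_Icc.2 ⟨le_rfl, hm β⟩), hne⟩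
    exact hβ.2 (hx1 β)

lemma filter_pivotKey_eq_image [NeZero k] (hp : ∀ α, 0 < p α) (hm : ∀ α, 1 ≤ m α)
    (hπ : ∀ α, ∀ i ∈ Icc 1 (m α), π α i ∈ Icc 1 (m α)) {L x : ℕ} (hL : (∏ α, p α ^ m α) ∣ L)
    (hτ : ¬ (∏ α, p α ^ m α) ∣ τ) (hx : x ∈ startAgreeSet p m π τ L) :
    (startAgreeSet p m π τ L).filter (fun y => pivotKey p m π τ y = pivotKey p m π τ x) =
      (range (p (pivot p m π τ x).1)).image (setPathDigit p m π (pivot p m π τ x) x) := by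
  have ha := isPivot_pivot hπ hτ hx
  ext y
  simp only [mem_filter, mem_image, mem_range]
  constructor
  · rintro ⟨-, hkey⟩
    simp only [pivotKey, Prod.mk.injEq] at hkey
    obtain ⟨hpiv, hbase⟩ := hkey
    rw [hpiv] at hbase
    unfold setPathDigit at hbase
    exact ⟨_, Nat.mod_lt _ (hp _), (eq_setDigit_of_setDigit_zero_eq hbase.symm).symm⟩
  · rintro ⟨d, hd, rfl⟩
    refine ⟨setPathDigit_mem_startAgreeSet hp hm hπ ha hL hx hd, ?_⟩
    have hpiv := pivot_eq_of_digitDiff_eq (π := π) (digitDiff_setPathDigit hp hπ ha hd)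
    simp only [pivotKey, hpiv]
    rw [setPathDigit, setPathDigit, setPathDigit, setDigit_setDigit (weight_pos hp _ _) hd]

end Pivot

theorem sum_startAgreeSet_stdAddChar_phase_sub_eq_zero {k lam : ℕ} [NeZero k] [NeZero lam]
    {p m : Fin k → ℕ} {π : Fin k → Equiv.Perm ℕ} (hp : ∀ α, 0 < p α) (hm : ∀ α, 1 ≤ m α)
    (hπ : ∀ α, ∀ i ∈ Icc 1 (m α), π α i ∈ Icc 1 (m α)) (hpl : ∀ α, p α ∣ lam)
    (g : Fin k → ℕ → ZMod lam) (g₀ : Fin k → ZMod lam) (h : ℕ → ZMod lam) {L τ : ℕ}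
    (hL : (∏ α, p α ^ m α) ∣ L) (hτ : ¬ (∏ α, p α ^ m α) ∣ τ) :
    ∑ x ∈ startAgreeSet p m π τ L,
      ZMod.stdAddChar (phase p m π (fun α => ((lam / p α : ℕ) : ZMod lam)) g g₀ h x -
        phase p m π (fun α => ((lam / p α : ℕ) : ZMod lam)) g g₀ h (x + τ)) = 0 := by
  classical
  set E := phase p m π (fun α => ((lam / p α : ℕ) : ZMod lam)) g g₀ h
  rw [← sum_fiberwise_of_maps_to (g := pivotKey p m π τ) fun x hx => mem_image_of_mem _ hx]
  refine sum_eq_zero fun y hy => ?_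
  obtain ⟨x, hx, rfl⟩ := mem_image.1 hy
  have ha := isPivot_pivot hπ hτ hx
  have ⟨hj1, hjm, _, _, hnext⟩ := ha
  set a := pivot p m π τ x
  set Δ : ZMod lam := (digit p m x a.1 (π a.1 (a.2 + 1)) : ZMod lam) -
    (digit p m (x + τ) a.1 (π a.1 (a.2 + 1)) : ZMod lam)
  have hterm (d : ℕ) (hd : d ∈ range (p a.1)) :
      ZMod.stdAddChar (E (setPathDigit p m π a x d) - E (setPathDigit p m π a x d + τ)) =
        ZMod.stdAddChar (E x - E (x + τ) -
            ((lam / p a.1 : ℕ) : ZMod lam) * (digit p m x a.1 (π a.1 a.2) : ZMod lam) * Δ) *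
          ZMod.stdAddChar (((lam / p a.1 : ℕ) : ZMod lam) * Δ * (d : ZMod lam)) := by
    rw [setPathDigit_add hπ ha, setPathDigit, setPathDigit,
      phase_setDigit_sub_phase_setDigit _ _ _ _ hp hπ (mem_Ico.2 ⟨hj1, hjm⟩) (mem_range.1 hd)
        (ha.digit_eq hπ (mem_Icc.2 ⟨hj1, le_rfl⟩))
        (fun h2 => ha.digit_eq hπ (mem_Icc.2 ⟨by omega, by omega⟩)),
      ← AddChar.map_add_eq_mul]
    congr 1
    ring
  rw [filter_pivotKey_eq_image hp hm hπ hL hτ hx,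
    sum_image (g := setPathDigit p m π a x) (setDigit_injOn (weight_pos hp _ _)),
    sum_congr rfl hterm, ← mul_sum,
    sum_range_stdAddChar_div_mul_sub (hpl _) (digit_lt _ _ (hp _)) (digit_lt _ _ (hp _)),
    if_neg hnext, mul_zero]

theorem stmt4_general (k lam : ℕ) (hk : 1 ≤ k)
    (p : Fin k → ℕ) (q : ℕ) (m : Fin k → ℕ)
    (hp : ∀ α, (p α).Prime) (hq : q.Prime)
    (hdistq : ∀ α, p α ≠ q)
    (hm : ∀ α, 1 ≤ m α)
    (hlam : 0 < lam) (hpl : ∀ α, p α ∣ lam)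
    (π : Fin k → Equiv.Perm ℕ)
    (hπ : ∀ α, ∀ i ∈ Finset.Icc 1 (m α), (π α) i ∈ Finset.Icc 1 (m α))
    (g : Fin k → ℕ → ZMod lam) (g₀ : Fin k → ZMod lam)
    (f : (α : Fin k) → (ℕ → ZMod (p α)) → ZMod lam)
    (hf : ∀ (α : Fin k) (v : ℕ → ZMod (p α)),
      f α v = ((lam / p α : ℕ) : ZMod lam) *
            (∑ i ∈ Finset.Ico 1 (m α),
              ((v ((π α) i)).val : ZMod lam) * ((v ((π α) (i + 1))).val : ZMod lam))
        + ∑ i ∈ Finset.Icc 1 (m α), g α i * ((v i).val : ZMod lam) + g₀ α)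
    (a : ((α : Fin k) → ℕ) → ((α : Fin k) → (ℕ → ZMod (p α))) → ZMod lam)
    (ha : ∀ (γ : (α : Fin k) → ℕ) (v : (α : Fin k) → (ℕ → ZMod (p α))),
      a γ v = (∑ α, f α (v α))
        + ∑ α, ((lam / p α : ℕ) : ZMod lam) *
            ((v α ((π α) 1)).val : ZMod lam) * ((γ α : ℕ) : ZMod lam))
    (gq1 gq0 : ZMod lam)
    (b : ((α : Fin k) → ℕ) → ((α : Fin k) → (ℕ → ZMod (p α))) → ZMod q → ZMod lam)
    (hb : ∀ (γ : (α : Fin k) → ℕ) (v : (α : Fin k) → (ℕ → ZMod (p α))) (w : ZMod q),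
      b γ v w = a γ v + gq1 * (w.val : ZMod lam) + gq0)
    (τ : ℕ) (hτ0 : 0 < τ) (hτL : τ < q * ∏ α, p α ^ m α) (hτS : q ∣ τ) :
    ∑ γ ∈ Fintype.piFinset (fun α => Finset.range (p α)),
      aacf (q * ∏ α, p α ^ m α)
        (fun i => eZMod lam
          (b γ (digv p m (i % ∏ α, p α ^ m α))
            ((i / ∏ α, p α ^ m α : ℕ) : ZMod q)))
        τ = 0 := by
  have : NeZero lam := ⟨hlam.ne'⟩
  have : NeZero k := ⟨by omega⟩
  have hp0 (α : Fin k) : 0 < p α := (hp α).pos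
  have hτN : ¬ (∏ α, p α ^ m α) ∣ τ := fun hNτ => by
    have hcop : q.Coprime (∏ α, p α ^ m α) := Nat.Coprime.prod_right fun α _ =>
      ((Nat.coprime_primes hq (hp α)).2 (hdistq α).symm).pow_right _
    exact absurd (Nat.le_of_dvd hτ0 (hcop.mul_dvd_of_dvd_of_dvd hτS hNτ)) (by omega)
  have hseq (γ : Fin k → ℕ) (x : ℕ) :
      eZMod lam (b γ (digv p m (x % ∏ α, p α ^ m α)) ((x / ∏ α, p α ^ m α : ℕ) : ZMod q)) =
        ZMod.stdAddChar (phase p m π (fun α => ((lam / p α : ℕ) : ZMod lam)) g g₀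
          (fun n => gq1 * (((n : ZMod q)).val : ZMod lam) + gq0) x +
          ∑ α, ((lam / p α : ℕ) : ZMod lam) * (digit p m x α (π α 1) : ZMod lam) *
            ((γ α : ℕ) : ZMod lam)) := by
    rw [eZMod_eq_stdAddChar, hb, ha, phase]
    simp only [hf, pathPhase, digit]
    congr 1
    ring
  simp only [hseq]
  rw [sum_piFinset_aacf_stdAddChar p hpl _ _ _ _ fun x α => digit_lt x _ (hp0 α)]
  exact mul_eq_zero_of_right _ (sum_startAgreeSet_stdAddChar_phase_sub_eq_zero hp0 hm hπ hpl
    g g₀ _ (dvd_mul_left _ q) hτN)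

theorem stmt4 (k lam : ℕ) (hk : 1 ≤ k)
    (p : Fin k → ℕ) (q : ℕ) (m : Fin k → ℕ)
    (hp : ∀ α, (p α).Prime) (hq : q.Prime)
    (hdist : ∀ α β, α ≠ β → p α ≠ p β) (hdistq : ∀ α, p α ≠ q)
    (hm : ∀ α, 1 ≤ m α)
    (hlam : 0 < lam) (hpl : ∀ α, p α ∣ lam) (hql : q ∣ lam)
    (π : Fin k → Equiv.Perm ℕ)
    (hπ : ∀ α, ∀ i ∈ Finset.Icc 1 (m α), (π α) i ∈ Finset.Icc 1 (m α))
    (g : Fin k → ℕ → ZMod lam) (g₀ : Fin k → ZMod lam)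
    (f : (α : Fin k) → (ℕ → ZMod (p α)) → ZMod lam)
    (hf : ∀ (α : Fin k) (v : ℕ → ZMod (p α)),
      f α v = ((lam / p α : ℕ) : ZMod lam) *
            (∑ i ∈ Finset.Ico 1 (m α),
              ((v ((π α) i)).val : ZMod lam) * ((v ((π α) (i + 1))).val : ZMod lam))
        + ∑ i ∈ Finset.Icc 1 (m α), g α i * ((v i).val : ZMod lam) + g₀ α)
    (a : ((α : Fin k) → ℕ) → ((α : Fin k) → (ℕ → ZMod (p α))) → ZMod lam)
    (ha : ∀ (γ : (α : Fin k) → ℕ) (v : (α : Fin k) → (ℕ → ZMod (p α))),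
      a γ v = (∑ α, f α (v α))
        + ∑ α, ((lam / p α : ℕ) : ZMod lam) *
            ((v α ((π α) 1)).val : ZMod lam) * ((γ α : ℕ) : ZMod lam))
    (gq1 gq0 : ZMod lam)
    (b : ((α : Fin k) → ℕ) → ((α : Fin k) → (ℕ → ZMod (p α))) → ZMod q → ZMod lam)
    (hb : ∀ (γ : (α : Fin k) → ℕ) (v : (α : Fin k) → (ℕ → ZMod (p α))) (w : ZMod q),
      b γ v w = a γ v + gq1 * (w.val : ZMod lam) + gq0)
    (τ : ℕ) (hτ0 : 0 < τ) (hτL : τ < q * ∏ α, p α ^ m α) (hτS : q ∣ τ) :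
    ∑ γ ∈ Fintype.piFinset (fun α => Finset.range (p α)),
      aacf (q * ∏ α, p α ^ m α)
        (fun i => eZMod lam
          (b γ (digv p m (i % ∏ α, p α ^ m α))
            ((i / ∏ α, p α ^ m α : ℕ) : ZMod q)))
        τ = 0 :=
  stmt4_general k lam hk p q m hp hq hdistq hm hlam hpl π hπ g g₀ f hf a ha gq1 gq0 b hb τ hτ0 hτL
    hτS
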